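/- arXiv:1912.05411 — 7 statements merged into one kernel-verified Lean document; each statement's English description precedes it below -/
import Mathlib

section
/- Let $K \subset F$ be a finite simple field extension with $[F:K] = n$ and assume $K$ is infinite. Then $\psi(F,K) + \phi(F,K) = n$. -/
/-!
A subspace `V` is primitive exactly when it meets every proper intermediate field only in `0`,
so a dimension count against a proper intermediate field of degree `ψ` gives `dim V + ψ ≤ n`.
Conversely, a simple extension has only finitely many intermediate fields, and a vector space
over an infinite field is not a finite union of proper subspaces; so a subspace meeting all
proper intermediate fields trivially can be enlarged one vector at a time as long as its
dimension plus `ψ` stays below `n`, which produces a primitive subspace of dimension `n - ψ`.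
-/

open IntermediateField Module

namespace Submodule

variable {K V : Type*} [Field K] [AddCommGroup V] [Module K V]

theorem exists_forall_notMem_of_ne_top [Infinite K] {ι : Type*} [Finite ι]
    {p : ι → Submodule K V} (hp : ∀ i, p i ≠ ⊤) : ∃ x, ∀ i, x ∉ p i := by
  by_contra! h
  obtain ⟨i, hi⟩ := Subspace.exists_eq_top_of_iUnion_eq_univ
    (Set.eq_univ_of_forall fun x => Set.mem_iUnion.2 (h x))
  exact hp i hi

theorem disjoint_sup_span_singleton {U W : Submodule K V} {x : V} (hUW : Disjoint U W)
    (hx : x ∉ U ⊔ W) : Disjoint (U ⊔ K ∙ x) W :=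
  (hUW.symm.disjoint_sup_right_of_disjoint_sup_left
    (disjoint_span_singleton_of_notMem (sup_comm U W ▸ hx))).symm

theorem exists_finrank_eq_forall_disjoint [Infinite K] [FiniteDimensional K V]
    {ι : Type*} [Finite ι] (W : ι → Submodule K V) {d : ℕ} (hW : ∀ i, finrank K (W i) ≤ d)
    {k : ℕ} (hk : k + d ≤ finrank K V) :
    ∃ U : Submodule K V, finrank K U = k ∧ ∀ i, Disjoint U (W i) := by
  induction k with
  | zero => exact ⟨⊥, finrank_bot K V, fun _ => disjoint_bot_left⟩
  | succ k ih =>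
    obtain ⟨U, hUk, hUW⟩ := ih (by omega)
    -- `none` stands for `U` itself, so that `x ∉ U` holds even when `ι` is empty.
    let W' : Option ι → Submodule K V := fun o => o.elim ⊥ W
    have hW' : ∀ o, finrank K (W' o) ≤ d
      | none => (finrank_bot K V).trans_le d.zero_le
      | some i => hW i
    have hne : ∀ o, U ⊔ W' o ≠ ⊤ := by
      intro o htop
      have := finrank_add_le_finrank_add_finrank U (W' o)
      rw [htop, finrank_top] at this
      linarith [hW' o]
    obtain ⟨x, hx⟩ := exists_forall_notMem_of_ne_top hne
    have hxU : x ∉ U := fun hxU => hx none (mem_sup_left hxU)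
    refine ⟨U ⊔ K ∙ x, by rw [finrank_sup_span_singleton hxU, hUk], fun i => ?_⟩
    exact disjoint_sup_span_singleton (hUW i) (hx (some i))

end Submodule

theorem IntermediateField.forall_adjoin_simple_eq_top_iff_forall_disjoint
    {K F : Type*} [Field K] [Field F] [Algebra K F] {V : Submodule K F} :
    (∀ a ∈ V, a ≠ 0 → K⟮a⟯ = ⊤) ↔
      ∀ M : IntermediateField K F, M ≠ ⊤ → Disjoint V (Subalgebra.toSubmodule M.toSubalgebra) := by
  refine ⟨fun hV M hM => Submodule.disjoint_def.2 fun a ha haM => ?_,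
    fun hV a ha ha0 => ?_⟩
  · by_contra ha0
    exact hM (top_le_iff.1 (hV a ha ha0 ▸ adjoin_simple_le_iff.2 haM))
  · by_contra hne
    exact ha0 (Submodule.disjoint_def.1 (hV _ hne) a ha (mem_adjoin_simple_self K a))

/-- The primitive subspace theorem: for a finite simple field extension `K ⊂ F`
of degree `n` with `K` infinite, `ψ(F,K) + φ(F,K) = n`, where `ψ(F,K)` is the
largest degree `[M:K]` of a proper intermediate field `M`, and `φ(F,K)` is the
largest dimension of a primitive `K`-subspace of `F` (a subspace all of whose
nonzero elements generate `F` over `K`). -/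
theorem stmt1 (K F : Type*) [Field K] [Field F] [Algebra K F] [Infinite K]
    [FiniteDimensional K F] (n : ℕ) (hn : Module.finrank K F = n)
    (hsimple : ∃ α : F, IntermediateField.adjoin K {α} = ⊤)
    (ψ φ : ℕ)
    (hψ : IsGreatest
      {d : ℕ | ∃ M : IntermediateField K F, M ≠ ⊤ ∧ Module.finrank K M = d} ψ)
    (hφ : IsGreatest
      {d : ℕ | ∃ V : Submodule K F,
        (∀ a ∈ V, a ≠ 0 → IntermediateField.adjoin K {a} = ⊤) ∧
        Module.finrank K V = d} φ) :
    ψ + φ = n := by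
  have : Finite (IntermediateField K F) :=
    Field.finite_intermediateField_of_exists_primitive_element K F hsimple
  obtain ⟨⟨M, hM, rfl⟩, hψ_max⟩ := hψ
  obtain ⟨⟨V, hV, rfl⟩, hφ_max⟩ := hφ
  have hle : finrank K V + finrank K M ≤ n := hn ▸
    Submodule.finrank_add_finrank_le_of_disjoint
      (forall_adjoin_simple_eq_top_iff_forall_disjoint.1 hV M hM)
  obtain ⟨U, hU, hU_disj⟩ := Submodule.exists_finrank_eq_forall_disjoint
    (fun M' : {M' : IntermediateField K F // M' ≠ ⊤} => Subalgebra.toSubmodule M'.1.toSubalgebra)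
    (fun M' => hψ_max ⟨M'.1, M'.2, rfl⟩) (k := n - finrank K M) (by omega)
  have hU_le : n - finrank K M ≤ finrank K V := hφ_max
    ⟨U, forall_adjoin_simple_eq_top_iff_forall_disjoint.2 fun M' hM' => hU_disj ⟨M', hM'⟩, hU⟩
  omega
end

section
/- Let $K \subset F$ be a finite separable field extension with $[F:K] = n$, and let $A$ be a primitive $K$-subspace of $F$. Then $\dim_K A \leq n - \psi(F,K)$. -/
/-!
A nonzero vector of a primitive subspace generates `F`, so it cannot lie in a proper
intermediate field `M`. Hence `A` and `M` are disjoint `K`-subspaces of `F`, and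
`dim A + [M : K] ≤ n`; take `M` of degree `ψ(F,K)`.
-/

open Module IntermediateField

theorem disjoint_toSubmodule_of_forall_adjoin_eq_top {K F : Type*} [Field K] [Field F]
    [Algebra K F] {A : Submodule K F} (hA : ∀ a ∈ A, a ≠ 0 → K⟮a⟯ = ⊤)
    {M : IntermediateField K F} (hM : M ≠ ⊤) :
    Disjoint A (Subalgebra.toSubmodule M.toSubalgebra) := by
  refine Submodule.disjoint_def.mpr fun a haA haM => ?_
  by_contra ha
  exact hM (top_le_iff.mp (hA a haA ha ▸ adjoin_simple_le_iff.mpr haM))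

theorem stmt2_general (K F : Type*) [Field K] [Field F] [Algebra K F]
    [FiniteDimensional K F]
    (n : ℕ) (hn : Module.finrank K F = n)
    (ψ : ℕ)
    (hψ : IsGreatest
      {d : ℕ | ∃ M : IntermediateField K F, M ≠ ⊤ ∧ Module.finrank K M = d} ψ)
    (A : Submodule K F)
    (hA : ∀ a ∈ A, a ≠ 0 → IntermediateField.adjoin K {a} = ⊤) :
    Module.finrank K A ≤ n - ψ := by
  obtain ⟨M, hM, rfl⟩ := hψ.1
  have h := Submodule.finrank_add_finrank_le_of_disjoint
    (disjoint_toSubmodule_of_forall_adjoin_eq_top hA hM)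
  change finrank K A + finrank K M ≤ finrank K F at h
  omega

/-- For a finite separable field extension `K ⊂ F` of degree `n`, any primitive
`K`-subspace `A` of `F` (i.e. `K(a) = F` for every nonzero `a ∈ A`) satisfies
`dim_K A ≤ n - ψ(F,K)`, where `ψ(F,K)` is the largest degree of a proper
intermediate field. -/
theorem stmt2 (K F : Type*) [Field K] [Field F] [Algebra K F]
    [FiniteDimensional K F] [Algebra.IsSeparable K F]
    (n : ℕ) (hn : Module.finrank K F = n)
    (ψ : ℕ)
    (hψ : IsGreatest
      {d : ℕ | ∃ M : IntermediateField K F, M ≠ ⊤ ∧ Module.finrank K M = d} ψ)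
    (A : Submodule K F)
    (hA : ∀ a ∈ A, a ≠ 0 → IntermediateField.adjoin K {a} = ⊤) :
    Module.finrank K A ≤ n - ψ :=
  stmt2_general K F n hn ψ hψ A hA
end

section
/- Let $K$ be a finite field and let $V$ be a $K$-vector space with $\dim_K V \geq 2$. Then the linear covering number of $V$ equals $\#K + 1$; that is, there exists a family of $\#K + 1$ proper $K$-subspaces of $V$ whose union is $V$, and no family of fewer than $\#K + 1$ proper subspaces of $V$ has union equal to $V$. -/
open Cardinal

-- avoidance lemma: a family of ≤ |K| proper subspaces misses some vector
lemma aux_avoid {K V : Type*} [Field K] [Fintype K] [AddCommGroup V] [Module K V] :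
    ∀ (n : ℕ) (S : Finset (Submodule K V)), S.card = n → n ≤ Fintype.card K →
    (∀ W ∈ S, W ≠ ⊤) → ∃ v : V, ∀ W ∈ S, v ∉ W := by
  classical
  intro n
  induction n using Nat.strong_induction_on with
  | _ n ih =>
    intro S hcard hle hproper
    rcases Finset.eq_empty_or_nonempty S with rfl | ⟨W₁, hW₁⟩
    · exact ⟨0, by simp⟩
    have hn1 : 1 ≤ n := by
      have := Finset.card_pos.mpr ⟨W₁, hW₁⟩; omega
    have herase : (S.erase W₁).card = n - 1 := by
      rw [Finset.card_erase_of_mem hW₁, hcard]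
    obtain ⟨y, hy⟩ := ih (n - 1) (by omega) (S.erase W₁) herase (by omega)
      (fun W hW => hproper W (Finset.mem_of_mem_erase hW))
    by_cases hyW₁ : y ∉ W₁
    · exact ⟨y, fun W hW => by
        rcases eq_or_ne W W₁ with rfl | hne
        · exact hyW₁
        · exact hy W (Finset.mem_erase.mpr ⟨hne, hW⟩)⟩
    push_neg at hyW₁
    obtain ⟨x, hx⟩ : ∃ x, x ∉ W₁ := by
      have := hproper W₁ hW₁
      by_contra hc; push_neg at hc
      exact this (Submodule.eq_top_iff'.mpr hc)
    by_contra hcon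
    push_neg at hcon
    classical
    set f : K → V := fun t => if t = 0 then x else y + t • x with hf
    have hfW₁ : ∀ t : K, f t ∉ W₁ := by
      intro t
      by_cases ht : t = 0
      · simpa [hf, ht] using hx
      · simp only [hf, if_neg ht]
        intro hmem
        have : t • x ∈ W₁ := by
          have := W₁.sub_mem hmem hyW₁; simpa using this
        exact hx (by simpa [ht] using W₁.smul_mem t⁻¹ this)
    have hchoice : ∀ t : K, ∃ W : Submodule K V, W ∈ S.erase W₁ ∧ f t ∈ W := by
      intro t
      obtain ⟨W, hWS, hmem⟩ := hcon (f t)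
      refine ⟨W, Finset.mem_erase.mpr ⟨?_, hWS⟩, hmem⟩
      rintro rfl; exact hfW₁ t hmem
    choose g hg1 hg2 using hchoice
    have hcardlt : Fintype.card (↥(S.erase W₁)) < Fintype.card K := by
      rw [Fintype.card_coe, herase]; omega
    obtain ⟨t, s, hts, hgts⟩ :=
      Fintype.exists_ne_map_eq_of_card_lt (fun t : K => (⟨g t, hg1 t⟩ : ↥(S.erase W₁))) hcardlt
    set W : Submodule K V := g t with hW
    have hgs : g s = W := by simpa [hW] using congrArg Subtype.val hgts.symm
    have hft : f t ∈ W := hg2 t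
    have hfs : f s ∈ W := hgs ▸ hg2 s
    -- show x ∈ W
    have hxW : x ∈ W := by
      by_cases ht : t = 0
      · simpa [hf, ht] using hft
      by_cases hs : s = 0
      · simpa [hf, hs] using hfs
      · have hsub : (t - s) • x ∈ W := by
          have := W.sub_mem hft hfs
          simp only [hf, if_neg ht, if_neg hs] at this
          have heq : (y + t • x) - (y + s • x) = (t - s) • x := by
            rw [sub_smul]; abel
          rwa [heq] at this
        have hts' : t - s ≠ 0 := sub_ne_zero.mpr hts
        have := W.smul_mem (t - s)⁻¹ hsub
        rwa [smul_smul, inv_mul_cancel₀ hts', one_smul] at this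
    -- get y ∈ W, contradiction
    have : ∃ u : K, u ≠ 0 ∧ f u ∈ W := by
      by_cases ht : t = 0
      · exact ⟨s, fun h => hts (h ▸ ht ▸ rfl), hfs⟩
      · exact ⟨t, ht, hft⟩
    obtain ⟨u, hu, hfu⟩ := this
    have hyWmem : y ∈ W := by
      have := W.sub_mem hfu (W.smul_mem u hxW)
      simp only [hf, if_neg hu] at this
      simpa using this
    exact hy W (hg1 t) hyWmem

/-- For a finite field `K` and a `K`-vector space `V` with `dim_K V ≥ 2`, the
linear covering number of `V` is `#K + 1`: there is a covering of `V` by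
`#K + 1` proper subspaces, and every covering of `V` by proper subspaces has
cardinality at least `#K + 1`. -/
theorem stmt3 (K V : Type*) [Field K] [Fintype K] [AddCommGroup V] [Module K V]
    (hdim : 2 ≤ Module.rank K V) :
    (∃ S : Set (Submodule K V), Cardinal.mk S = Fintype.card K + 1 ∧
      (∀ W ∈ S, W ≠ ⊤) ∧ ∀ v : V, ∃ W ∈ S, v ∈ W) ∧
    (∀ S : Set (Submodule K V), (∀ W ∈ S, W ≠ ⊤) → (∀ v : V, ∃ W ∈ S, v ∈ W) →
      (Fintype.card K + 1 : Cardinal) ≤ Cardinal.mk S) := by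
  classical
  have part2 : (∀ S : Set (Submodule K V), (∀ W ∈ S, W ≠ ⊤) → (∀ v : V, ∃ W ∈ S, v ∈ W) →
      (Fintype.card K + 1 : Cardinal) ≤ Cardinal.mk S) := by
    intro S hproper hcov
    by_contra h
    push_neg at h
    have hcast : ((Fintype.card K + 1 : ℕ) : Cardinal) = (Fintype.card K + 1 : Cardinal) := by
      push_cast; ring
    have hfin : S.Finite := by
      rw [← hcast] at h
      exact Cardinal.lt_aleph0_iff_set_finite.mp (h.trans (Cardinal.nat_lt_aleph0 _))
    have hmk : Cardinal.mk S = hfin.toFinset.card := by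
      rw [← Cardinal.mk_coe_finset]
      congr 1
      exact congrArg _ hfin.coe_toFinset.symm
    rw [hmk, ← hcast, Nat.cast_lt] at h
    obtain ⟨v, hv⟩ := aux_avoid hfin.toFinset.card hfin.toFinset rfl (by omega)
      (fun W hW => hproper W (hfin.mem_toFinset.mp hW))
    obtain ⟨W, hWS, hmem⟩ := hcov v
    exact hv W (hfin.mem_toFinset.mpr hWS) hmem
  refine ⟨?_, part2⟩
  -- construct the covering
  set b := Module.Basis.ofVectorSpace K V with hb
  have hrank : 2 ≤ Cardinal.mk (Module.Basis.ofVectorSpaceIndex K V) := by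
    rw [b.mk_eq_rank'']; exact hdim
  obtain ⟨i, j, hij⟩ := Cardinal.two_le_iff.mp hrank
  set φ : Option K → (V →ₗ[K] K) := fun o =>
    Option.elim o (b.coord i) (fun c => c • b.coord i - b.coord j) with hφ
  set S : Set (Submodule K V) := Set.range (fun o => LinearMap.ker (φ o)) with hS
  have hproper : ∀ W ∈ S, W ≠ ⊤ := by
    rintro W ⟨o, rfl⟩
    rw [Ne, LinearMap.ker_eq_top]
    intro h0
    cases o with
    | none =>
      have := congrArg (fun f : V →ₗ[K] K => f (b i)) h0
      simp [hφ, Module.Basis.coord_apply, Module.Basis.repr_self] at this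
    | some c =>
      have := congrArg (fun f : V →ₗ[K] K => f (b j)) h0
      simp [hφ, Module.Basis.coord_apply, Module.Basis.repr_self, Finsupp.single_apply, Ne.symm hij] at this
  have hcov : ∀ v : V, ∃ W ∈ S, v ∈ W := by
    intro v
    by_cases hvi : b.coord i v = 0
    · exact ⟨LinearMap.ker (φ none), ⟨none, rfl⟩, by simp [hφ, LinearMap.mem_ker, hvi]⟩
    · refine ⟨LinearMap.ker (φ (some (b.coord j v * (b.coord i v)⁻¹))), ⟨_, rfl⟩, ?_⟩
      simp only [hφ, LinearMap.mem_ker, Option.elim, LinearMap.sub_apply, LinearMap.smul_apply,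
        smul_eq_mul]
      rw [mul_assoc, inv_mul_cancel₀ (by simpa [Module.Basis.coord_apply] using hvi), mul_one, sub_self]
  refine ⟨S, ?_, hproper, hcov⟩
  refine le_antisymm ?_ (part2 S hproper hcov)
  have h2 := Cardinal.mk_range_le_lift (f := fun o : Option K => LinearMap.ker (φ o))
  have hK : Cardinal.mk (Option K) = ((Fintype.card K + 1 : ℕ) : Cardinal) := by
    simp [Cardinal.mk_option, Cardinal.mk_fintype]
  rw [hK, Cardinal.lift_natCast] at h2
  have h3 : Cardinal.mk S ≤ ((Fintype.card K + 1 : ℕ) : Cardinal) :=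
    Cardinal.lift_le_nat_iff.mp h2
  calc Cardinal.mk S ≤ ((Fintype.card K + 1 : ℕ) : Cardinal) := h3
    _ = Fintype.card K + 1 := by push_cast; ring
end

section
/- Let $K$ be an infinite field and let $V$ be a $K$-vector space with $\dim_K V = n < \infty$. Let $\mathcal{F}$ be a nonempty finite collection of proper subspaces of $V$, and let $s = \max\{\dim_K S \mid S \in \mathcal{F}\}$. Let $T$ be a subspace of $V$ that is maximal (with respect to inclusion) among subspaces satisfying $T \cap S = 0$ for all $S \in \mathcal{F}$. Then $\dim_K T = n - s$. -/
/-- Let `K` be an infinite field, `V` a `K`-vector space of finite dimension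
`n`, `𝓕` a nonempty finite collection of proper subspaces of `V`, and
`s = max {dim S | S ∈ 𝓕}`. If `T` is a subspace maximal (w.r.t. inclusion)
with the property `T ∩ S = 0` for all `S ∈ 𝓕`, then `dim T = n - s`. -/
theorem stmt8 (K V : Type*) [Field K] [Infinite K] [AddCommGroup V] [Module K V]
    [FiniteDimensional K V] (n : ℕ) (hn : Module.finrank K V = n)
    (𝓕 : Finset (Submodule K V)) (h𝓕 : 𝓕.Nonempty) (hprop : ∀ S ∈ 𝓕, S ≠ ⊤)
    (s : ℕ)
    (hs : IsGreatest {d : ℕ | ∃ S ∈ 𝓕, Module.finrank K S = d} s)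
    (T : Submodule K V) (hT : ∀ S ∈ 𝓕, T ⊓ S = ⊥)
    (hTmax : ∀ T' : Submodule K V, (∀ S ∈ 𝓕, T' ⊓ S = ⊥) → T ≤ T' → T' = T) :
    Module.finrank K T = n - s := by
  classical
  obtain ⟨S₀, hS₀, hS₀rank⟩ := hs.1
  -- Upper bound: finrank T + s ≤ n
  have key : ∀ S ∈ 𝓕, Module.finrank K ↥(T ⊔ S) = Module.finrank K T + Module.finrank K S := by
    intro S hS
    have := Submodule.finrank_sup_add_finrank_inf_eq T S
    rw [hT S hS, finrank_bot] at this
    omega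
  have hub : Module.finrank K T + s ≤ n := by
    have h1 : Module.finrank K ↥(T ⊔ S₀) ≤ n := hn ▸ Submodule.finrank_le _
    rw [key S₀ hS₀, hS₀rank] at h1
    exact h1
  -- Lower bound: ¬ (finrank T + s < n)
  have hlb : ¬ (Module.finrank K T + s < n) := by
    intro hlt
    set 𝓖 : Finset (Submodule K V) := 𝓕.image (fun S => T ⊔ S) with h𝓖
    have htop : ⊤ ∉ 𝓖 := by
      simp only [h𝓖, Finset.mem_image, not_exists]
      rintro S ⟨hS, htop⟩
      have h1 : Module.finrank K ↥(T ⊔ S) < n := by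
        rw [key S hS]
        have hle : Module.finrank K S ≤ s := hs.2 ⟨S, hS, rfl⟩
        omega
      rw [htop, finrank_top, hn] at h1
      omega
    have hne := Subspace.biUnion_ne_univ_of_top_notMem htop
    have : ∃ v : V, v ∉ ⋃ p ∈ 𝓖, (p : Set V) := by
      by_contra h
      push_neg at h
      exact hne (Set.eq_univ_of_forall h)
    obtain ⟨v, hv⟩ := this
    have hvnot : ∀ S ∈ 𝓕, v ∉ T ⊔ S := by
      intro S hS hmem
      exact hv (Set.mem_biUnion (Finset.mem_image_of_mem _ hS) hmem)
    set T' : Submodule K V := T ⊔ Submodule.span K {v} with hT'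
    have hT'int : ∀ S ∈ 𝓕, T' ⊓ S = ⊥ := by
      intro S hS
      rw [Submodule.eq_bot_iff]
      rintro x ⟨hx1, hx2⟩
      obtain ⟨t, ht, y, hy, rfl⟩ := Submodule.mem_sup.mp hx1
      obtain ⟨c, rfl⟩ := Submodule.mem_span_singleton.mp hy
      rcases eq_or_ne c 0 with rfl | hc
      · rw [zero_smul, add_zero] at hx2 ⊢
        have : t ∈ T ⊓ S := ⟨ht, hx2⟩
        rwa [hT S hS, Submodule.mem_bot] at this
      · exfalso
        apply hvnot S hS
        have : v = c⁻¹ • ((t + c • v) - t) := by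
          rw [add_sub_cancel_left, smul_smul, inv_mul_cancel₀ hc, one_smul]
        rw [this]
        exact Submodule.smul_mem _ _ (Submodule.sub_mem _
          (Submodule.mem_sup_right hx2) (Submodule.mem_sup_left ht))
    have heq : T' = T := hTmax T' hT'int le_sup_left
    obtain ⟨S, hS⟩ := h𝓕
    apply hvnot S hS
    exact Submodule.mem_sup_left (heq ▸ Submodule.mem_sup_right
      (Submodule.mem_span_singleton_self v))
  omega
end

section
/- Let $K \subset F$ be a finite simple field extension with $[F:K] = n$ and $K$ infinite, and let $\mathcal{F}$ be the collection of all proper intermediate fields of $K \subset F$ (regarded as $K$-subspaces of $F$). If $T$ is a $K$-subspace of $F$ maximal (with respect to inclusion) among subspaces satisfying $T \cap M = 0$ for every $M \in \mathcal{F}$, then $\dim_K T = n - \psi(F,K)$, and moreover $T$ is a primitive $K$-subspace of $F$ of maximal dimension, so $\dim_K T = \phi(F,K)$. -/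
/-!
A subspace `V` is primitive exactly when it meets every proper intermediate field `M` trivially,
so `dim V + dim M ≤ n`; hence `φ ≤ n - ψ`. Conversely, a simple extension has only finitely
many intermediate fields, and over an infinite field the finitely many proper subspaces
`V ⊔ M` cannot cover `F`; a vector outside all of them can be added to `V` without losing
primitivity. So a maximal primitive `V` satisfies `V ⊕ M = F` for some proper `M`, giving
`dim V ≥ n - ψ`.
-/

open Module

namespace IntermediateField

variable {K F : Type*} [Field K] [Field F] [Algebra K F]

def IsPrimitiveSubspace (V : Submodule K F) : Prop :=
  ∀ a ∈ V, a ≠ 0 → adjoin K {a} = ⊤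

theorem isPrimitiveSubspace_iff_disjoint {V : Submodule K F} :
    IsPrimitiveSubspace V ↔
      ∀ M : IntermediateField K F, M ≠ ⊤ → Disjoint V (Subalgebra.toSubmodule M.toSubalgebra) := by
  simp only [Submodule.disjoint_def]
  constructor
  · intro hV M hM a haV haM
    by_contra ha
    exact hM (top_le_iff.1 (hV a haV ha ▸ adjoin_simple_le_iff.2 haM))
  · intro hV a haV ha
    by_contra hadj
    exact ha (hV _ hadj a haV (mem_adjoin_simple_self K a))

theorem IsPrimitiveSubspace.finrank_add_finrank_le [FiniteDimensional K F]
    {V : Submodule K F} (hV : IsPrimitiveSubspace V) {M : IntermediateField K F} (hM : M ≠ ⊤) :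
    finrank K V + finrank K M ≤ finrank K F :=
  Submodule.finrank_add_finrank_le_of_disjoint (isPrimitiveSubspace_iff_disjoint.1 hV M hM)

theorem IsPrimitiveSubspace.sup_span_singleton {V : Submodule K F} (hV : IsPrimitiveSubspace V)
    {x : F} (hx : ∀ M : IntermediateField K F, M ≠ ⊤ →
      x ∉ Subalgebra.toSubmodule M.toSubalgebra ⊔ V) :
    IsPrimitiveSubspace (V ⊔ K ∙ x) := by
  refine isPrimitiveSubspace_iff_disjoint.2 fun M hM => ?_
  have hxM : Disjoint (Subalgebra.toSubmodule M.toSubalgebra ⊔ V) (K ∙ x) :=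
    Submodule.disjoint_span_singleton.2 fun h => absurd h (hx M hM)
  exact ((isPrimitiveSubspace_iff_disjoint.1 hV M hM).symm.disjoint_sup_right_of_disjoint_sup_left
    hxM).symm

theorem exists_isCompl_of_maximal_isPrimitiveSubspace [Infinite K]
    [Finite (IntermediateField K F)] (hKF : (⊥ : IntermediateField K F) ≠ ⊤)
    {V : Submodule K F} (hV : Maximal IsPrimitiveSubspace V) :
    ∃ M : IntermediateField K F, M ≠ ⊤ ∧ IsCompl V (Subalgebra.toSubmodule M.toSubalgebra) := by
  by_contra! hcompl
  have hsup : ∀ M : {M : IntermediateField K F // M ≠ ⊤},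
      Subalgebra.toSubmodule M.1.toSubalgebra ⊔ V ≠ ⊤ := fun M htop =>
    hcompl M.1 M.2 ⟨isPrimitiveSubspace_iff_disjoint.1 hV.prop M.1 M.2,
      codisjoint_iff.2 (sup_comm V _ ▸ htop)⟩
  obtain ⟨x, hx⟩ : ∃ x : F, ∀ M : {M : IntermediateField K F // M ≠ ⊤},
      x ∉ Subalgebra.toSubmodule M.1.toSubalgebra ⊔ V := by
    by_contra! hcover
    obtain ⟨M, hM⟩ := Subspace.exists_eq_top_of_iUnion_eq_univ
      (Set.iUnion_eq_univ_iff.2 hcover)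
    exact hsup M hM
  have hxV : x ∈ V := hV.le_of_ge (hV.prop.sup_span_singleton fun M hM => hx ⟨M, hM⟩)
    le_sup_left (Submodule.mem_sup_right (Submodule.mem_span_singleton_self x))
  exact hx ⟨⊥, hKF⟩ (Submodule.mem_sup_right hxV)

end IntermediateField

open IntermediateField in
/-- Let `K ⊂ F` be a finite simple field extension of degree `n` with `K`
infinite and let `𝓕` be the collection of all proper intermediate fields,
regarded as `K`-subspaces of `F`. If `T` is a `K`-subspace of `F` maximal
(w.r.t. inclusion) among subspaces meeting every proper intermediate field
trivially, then `dim_K T = n - ψ(F,K)`, `T` is a primitive `K`-subspace, and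
`dim_K T = φ(F,K)`. -/
theorem stmt10 (K F : Type*) [Field K] [Field F] [Algebra K F] [Infinite K]
    [FiniteDimensional K F] (n : ℕ) (hn : Module.finrank K F = n)
    (hsimple : ∃ α : F, IntermediateField.adjoin K {α} = ⊤)
    (ψ φ : ℕ)
    (hψ : IsGreatest
      {d : ℕ | ∃ M : IntermediateField K F, M ≠ ⊤ ∧ Module.finrank K M = d} ψ)
    (hφ : IsGreatest
      {d : ℕ | ∃ V : Submodule K F,
        (∀ a ∈ V, a ≠ 0 → IntermediateField.adjoin K {a} = ⊤) ∧
        Module.finrank K V = d} φ)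
    (T : Submodule K F)
    (hT : ∀ M : IntermediateField K F, M ≠ ⊤ → ∀ x ∈ T, x ∈ M → x = 0)
    (hTmax : ∀ T' : Submodule K F,
      (∀ M : IntermediateField K F, M ≠ ⊤ → ∀ x ∈ T', x ∈ M → x = 0) →
      T ≤ T' → T' = T) :
    Module.finrank K T = n - ψ ∧
      (∀ a ∈ T, a ≠ 0 → IntermediateField.adjoin K {a} = ⊤) ∧
      Module.finrank K T = φ := by
  have hprim : ∀ V : Submodule K F, IsPrimitiveSubspace V ↔
      ∀ M : IntermediateField K F, M ≠ ⊤ → ∀ x ∈ V, x ∈ M → x = 0 := fun V => by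
    simp only [isPrimitiveSubspace_iff_disjoint, Submodule.disjoint_def]; rfl
  have hTprim : IsPrimitiveSubspace T := (hprim T).2 hT
  have hTmaximal : Maximal IsPrimitiveSubspace T :=
    ⟨hTprim, fun T' hT' hle => (hTmax T' ((hprim T').1 hT') hle).le⟩
  obtain ⟨M₀, hM₀, hM₀ψ⟩ := hψ.1
  have : Finite (IntermediateField K F) :=
    Field.finite_intermediateField_of_exists_primitive_element K F hsimple
  obtain ⟨M, hM, hcompl⟩ :=
    exists_isCompl_of_maximal_isPrimitiveSubspace (ne_top_of_le_ne_top hM₀ bot_le) hTmaximal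
  have hTM : finrank K T + finrank K M = n := hn ▸ Submodule.finrank_add_eq_of_isCompl hcompl
  have hMψ : finrank K M ≤ ψ := hψ.2 ⟨M, hM, rfl⟩
  have hTψ : finrank K T + ψ ≤ n := hn ▸ hM₀ψ ▸ hTprim.finrank_add_finrank_le hM₀
  obtain ⟨V, hV, hVφ⟩ := hφ.1
  have hVψ : finrank K V + ψ ≤ n := hn ▸ hM₀ψ ▸ IsPrimitiveSubspace.finrank_add_finrank_le hV hM₀
  have hTφ : finrank K T ≤ φ := hφ.2 ⟨T, hTprim, rfl⟩
  exact ⟨by omega, hTprim, by omega⟩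
end

section
/- Let $K$ be an infinite field and $K \subset F$ a finite simple field extension with $[F:K] = n$. Then there exists a primitive $K$-subspace $V$ of $F$ with $\dim_K V = n - \psi(F,K)$. -/
open Module Submodule

/-- Given finitely many subspaces of dimension ≤ ψ, there is a subspace of any
dimension `k` with `k + ψ ≤ dim` intersecting each of them trivially. -/
lemma aux_avoid_s11 {K F : Type*} [Field K] [Infinite K] [AddCommGroup F] [Module K F]
    [FiniteDimensional K F] {ι : Type*} [Finite ι] [Nonempty ι]
    (W : ι → Submodule K F) (ψ : ℕ) (hW : ∀ i, finrank K (W i) ≤ ψ) :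
    ∀ k : ℕ, k + ψ ≤ finrank K F →
      ∃ V : Submodule K F, finrank K V = k ∧ ∀ i, V ⊓ W i = ⊥ := by
  intro k
  induction k with
  | zero =>
    intro _
    exact ⟨⊥, finrank_bot K F, fun i => bot_inf_eq _⟩
  | succ k ih =>
    intro hk
    obtain ⟨V, hVrank, hVdisj⟩ := ih (by omega)
    -- each V ⊔ W i is a proper subspace
    have hproper : ∀ i, V ⊔ W i ≠ ⊤ := by
      intro i htop
      have h1 : finrank K ↥(V ⊔ W i) + finrank K ↥(V ⊓ W i)
          = finrank K V + finrank K (W i) := finrank_sup_add_finrank_inf_eq V (W i)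
      rw [htop, hVdisj i, finrank_bot, finrank_top] at h1
      have := hW i
      omega
    -- find x outside all of them
    have : ¬ (⋃ i, ((V ⊔ W i : Submodule K F) : Set F)) = Set.univ := by
      intro h
      obtain ⟨i, hi⟩ := Subspace.exists_eq_top_of_iUnion_eq_univ h
      exact hproper i hi
    obtain ⟨x, hx⟩ := Set.ne_univ_iff_exists_notMem _ |>.mp this
    simp only [Set.mem_iUnion, not_exists, SetLike.mem_coe] at hx
    have hxV : x ∉ V := fun h => hx (Classical.arbitrary ι) (Submodule.mem_sup_left h)
    have hxne : x ≠ 0 := fun h => hxV (h ▸ V.zero_mem)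
    refine ⟨V ⊔ K ∙ x, ?_, ?_⟩
    · have hdis : V ⊓ (K ∙ x) = ⊥ := by
        rw [eq_bot_iff]
        rintro y ⟨hyV, hyx⟩
        rw [SetLike.mem_coe, mem_span_singleton] at hyx
        obtain ⟨c, rfl⟩ := hyx
        rcases eq_or_ne c 0 with rfl | hc
        · simp
        · exact absurd (by simpa [hc] using V.smul_mem c⁻¹ hyV) hxV
      have h1 : finrank K ↥(V ⊔ (K ∙ x)) + finrank K ↥(V ⊓ (K ∙ x))
          = finrank K V + finrank K ↥(K ∙ x) := finrank_sup_add_finrank_inf_eq V (K ∙ x)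
      rw [hdis, finrank_bot, finrank_span_singleton hxne, hVrank] at h1
      omega
    · intro i
      rw [eq_bot_iff]
      rintro y ⟨hy1, hy2⟩
      obtain ⟨u, hu, z, hz, rfl⟩ := mem_sup.mp hy1
      rw [mem_span_singleton] at hz
      obtain ⟨c, rfl⟩ := hz
      rcases eq_or_ne c 0 with rfl | hc
      · have : u ∈ V ⊓ W i := ⟨hu, by simpa using hy2⟩
        rw [hVdisj i] at this
        simpa using this
      · exfalso
        apply hx i
        have : c • x = (u + c • x) - u := by abel
        have hmem : c • x ∈ V ⊔ W i := this ▸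
          Submodule.sub_mem _ (Submodule.mem_sup_right hy2) (Submodule.mem_sup_left hu)
        simpa [hc] using Submodule.smul_mem _ c⁻¹ hmem

/-- Let `K` be an infinite field and `K ⊂ F` a finite simple field extension of
degree `n`. Then there exists a primitive `K`-subspace `V` of `F` with
`dim_K V = n - ψ(F,K)`, where `ψ(F,K)` is the largest degree of a proper
intermediate field. -/
theorem stmt11 (K F : Type*) [Field K] [Field F] [Algebra K F] [Infinite K]
    [FiniteDimensional K F] (n : ℕ) (hn : Module.finrank K F = n)
    (hsimple : ∃ α : F, IntermediateField.adjoin K {α} = ⊤)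
    (ψ : ℕ)
    (hψ : IsGreatest
      {d : ℕ | ∃ M : IntermediateField K F, M ≠ ⊤ ∧ Module.finrank K M = d} ψ) :
    ∃ V : Submodule K F,
      (∀ a ∈ V, a ≠ 0 → IntermediateField.adjoin K {a} = ⊤) ∧
      Module.finrank K V = n - ψ := by
  classical
  have halg : Algebra.IsAlgebraic K F := Algebra.IsAlgebraic.of_finite K F
  have hfin : Finite (IntermediateField K F) :=
    Field.finite_intermediateField_of_exists_primitive_element K F hsimple
  obtain ⟨M₀, hM₀ne, hM₀rank⟩ := hψ.1
  set ι := {M : IntermediateField K F // M ≠ ⊤}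
  haveI : Finite ι := Subtype.finite
  haveI : Nonempty ι := ⟨⟨M₀, hM₀ne⟩⟩
  set W : ι → Submodule K F := fun M => (M.1 : IntermediateField K F).toSubmodule
  have hWrank : ∀ i : ι, Module.finrank K (W i) ≤ ψ := by
    intro i
    exact hψ.2 ⟨i.1, i.2, rfl⟩
  -- ψ < n
  have hψlt : ψ < n := by
    rw [← hn, ← hM₀rank]
    have hne : (M₀.toSubmodule : Submodule K F) ≠ ⊤ := by
      intro h
      apply hM₀ne
      rw [eq_top_iff]
      intro x _
      exact Submodule.eq_top_iff'.mp h x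
    exact Submodule.finrank_lt hne
  obtain ⟨V, hVrank, hVdisj⟩ := aux_avoid_s11 W ψ hWrank (n - ψ) (by omega)
  refine ⟨V, ?_, hVrank⟩
  intro a haV hane
  by_contra htop
  have hamem : a ∈ W ⟨IntermediateField.adjoin K {a}, htop⟩ :=
    IntermediateField.mem_adjoin_simple_self K a
  have : a ∈ V ⊓ W ⟨IntermediateField.adjoin K {a}, htop⟩ := ⟨haV, hamem⟩
  rw [hVdisj] at this
  exact hane (by simpa using this)
end

section
/- Let $q$ be a prime power and $n \in \mathbb{N}$ with $d(n) < q + 2$. Let $M_1$ be a proper intermediate subfield of $\mathbb{F}_q \subset \mathbb{F}_{q^n}$ with $[M_1 : \mathbb{F}_q] = \psi(\mathbb{F}_{q^n}, \mathbb{F}_q)$, and let $W$ be a primitive $\mathbb{F}_q$-subspace of $\mathbb{F}_{q^n}$ with $\dim_{\mathbb{F}_q} W = \phi(\mathbb{F}_{q^n}, \mathbb{F}_q)$. Suppose $\{W_1, \ldots, W_l\}$ is a subspace partition of $W$ with $\dim_{\mathbb{F}_q} W_i = t_i \leq \psi(\mathbb{F}_{q^n}, \mathbb{F}_q)$ for each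 $i$. Then for each $\alpha \in M_1 \setminus \{0\}$ and each $1 \leq i \leq l$ there exists a $t_i$-dimensional $\mathbb{F}_q$-subspace $W_{i_\alpha}$ of $\mathbb{F}_{q^n}$ such that the collection consisting of $W$, $M_1$, and all the subspaces $W_{i_\alpha}$ is a subspace partition of $\mathbb{F}_{q^n}$. -/
open Module

/-- Existence of primitive subspaces of each dimension `k` with `k + ψ ≤ n`. -/
lemma aux_exists_primitive (K F : Type*) [Field K] [Fintype K] [Field F] [Algebra K F]
    [FiniteDimensional K F] (n : ℕ) (hn : Module.finrank K F = n) (hn2 : 2 ≤ n)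
    (hd : n.divisors.card < Fintype.card K + 2)
    (ψ : ℕ) (hψub : ∀ M : IntermediateField K F, M ≠ ⊤ → Module.finrank K M ≤ ψ)
    (k : ℕ) (hk : k + ψ ≤ n) :
    ∃ V : Submodule K F, (∀ a ∈ V, a ≠ 0 → IntermediateField.adjoin K {a} = ⊤) ∧
      Module.finrank K V = k := by
  classical
  have hFin : Finite F := Module.finite_of_finite K
  letI : Fintype F := Fintype.ofFinite F
  set q := Fintype.card K with hq
  have hq2 : 2 ≤ q := Fintype.one_lt_card
  set p := ringChar K with hp
  obtain ⟨r', hpprime, hqpr'⟩ := FiniteField.card K p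
  set r : ℕ := (r' : ℕ) with hr
  have hqpr : q = p ^ r := by rw [hq, hqpr']
  haveI : CharP F p := charP_of_injective_algebraMap (algebraMap K F).injective p
  haveI : Fact p.Prime := ⟨hpprime⟩
  haveI : ExpChar F p := ExpChar.prime hpprime
  -- the fixed fields
  have halg : ∀ d : ℕ, ∀ c : K, algebraMap K F c ∈ (iterateFrobenius F p (r*d)).eqLocusField (RingHom.id F) := by
    intro d c
    show iterateFrobenius F p (r*d) (algebraMap K F c) = algebraMap K F c
    rw [iterateFrobenius_def, ← map_pow]
    congr 1
    calc c ^ p ^ (r * d) = c ^ (p ^ r) ^ d := by rw [← pow_mul]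
    _ = c ^ q ^ d := by rw [← hqpr]
    _ = c := FiniteField.pow_card_pow d c
  set Sf : ℕ → IntermediateField K F := fun d =>
    (((iterateFrobenius F p (r*d)).eqLocusField (RingHom.id F)).toIntermediateField (halg d)) with hSf
  have hSmem : ∀ d (x : F), x ∈ Sf d ↔ x ^ q ^ d = x := by
    intro d x
    show iterateFrobenius F p (r*d) x = x ↔ _
    rw [iterateFrobenius_def]
    have hpq : p ^ (r * d) = q ^ d := by rw [pow_mul, ← hqpr]
    rw [hpq]
  -- properness
  have hSproper : ∀ d ∈ n.properDivisors, Sf d ≠ ⊤ := by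
    intro d hd' htop
    have hdn : d < n := (Nat.mem_properDivisors.mp hd').2
    have hcard : Fintype.card F ≤ q ^ d := by
      have hsub : (Finset.univ : Finset F) ⊆
          insert 0 (Polynomial.nthRoots (q ^ d - 1) (1 : F)).toFinset := by
        intro x _
        have hx : x ∈ Sf d := htop ▸ IntermediateField.mem_top
        rw [hSmem] at hx
        rcases eq_or_ne x 0 with rfl | hx0
        · exact Finset.mem_insert_self _ _
        · refine Finset.mem_insert_of_mem ?_
          rw [Multiset.mem_toFinset, Polynomial.mem_nthRoots]
          · have := hx
            have hqd : 1 ≤ q ^ d := Nat.one_le_pow _ _ (by omega)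
            have : x ^ (q ^ d - 1) * x = x := by
              rw [← pow_succ, Nat.sub_add_cancel hqd, hx]
            field_simp at this
            exact this
          · have : 2 ≤ q ^ d := by
              rcases Nat.eq_zero_or_pos d with rfl | hd0
              · -- d = 0 : then 1 < n, but d ∈ properDivisors means d ∣ n and 0 ∣ n → n = 0
                have := (Nat.mem_properDivisors.mp hd').1
                simp at this
                omega
              · calc 2 = 2 ^ 1 := rfl
                _ ≤ q ^ d := Nat.pow_le_pow_left hq2 1 |>.trans (Nat.pow_le_pow_right (by omega) hd0)
            omega
      calc Fintype.card F = Finset.univ.card := (Finset.card_univ).symm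
        _ ≤ _ := Finset.card_le_card hsub
        _ ≤ 1 + (q ^ d - 1) := by
            refine (Finset.card_insert_le _ _).trans ?_
            have := Multiset.toFinset_card_le (Polynomial.nthRoots (q ^ d - 1) (1 : F))
            have h2 := Polynomial.card_nthRoots (q ^ d - 1) (1 : F)
            omega
        _ ≤ q ^ d := by
            have : 1 ≤ q ^ d := Nat.one_le_pow _ _ (by omega)
            omega
    have hcardF : Fintype.card F = q ^ n := by
      rw [card_eq_pow_finrank (K := K) (V := F), hn]
    rw [hcardF] at hcard
    have := Nat.pow_lt_pow_right (by omega : 1 < q) hdn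
    omega
  -- every nonzero non-primitive element lies in some Sf d
  have hnonprim : ∀ y : F, y ≠ 0 → IntermediateField.adjoin K {y} ≠ ⊤ →
      ∃ d ∈ n.properDivisors, y ∈ Sf d := by
    intro y hy0 hyne
    set E := IntermediateField.adjoin K {y} with hE
    set dE := Module.finrank K E with hdE
    refine ⟨dE, ?_, ?_⟩
    · rw [Nat.mem_properDivisors]
      constructor
      · have h := Module.finrank_mul_finrank (F := K) (K := ↥E) (A := F)
        exact ⟨Module.finrank (↥E) F, by rw [← hn, ← h, hdE]⟩
      · rcases lt_or_ge dE n with h | h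
        · exact h
        · exfalso
          apply hyne
          have hfr : Module.finrank K E.toSubmodule = Module.finrank K F := by
            have h1 : Module.finrank K E.toSubmodule ≤ Module.finrank K F :=
              E.toSubmodule.finrank_le
            have h2 : Module.finrank K E.toSubmodule = dE := rfl
            omega
          have h3 : Subalgebra.toSubmodule E.toSubalgebra = ⊤ :=
            Submodule.eq_top_of_finrank_eq hfr
          rw [eq_top_iff]
          intro x _
          have hx : x ∈ Subalgebra.toSubmodule E.toSubalgebra := h3 ▸ Submodule.mem_top
          exact hx
    · haveI : Finite E := Module.finite_of_finite K
      letI : Fintype E := Fintype.ofFinite E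
      have hcardE : Fintype.card E = q ^ dE := card_eq_pow_finrank (K := K) (V := E)
      have hyE : y ∈ E := IntermediateField.mem_adjoin_simple_self K y
      have h5 := FiniteField.pow_card (⟨y, hyE⟩ : E)
      rw [hcardE] at h5
      rw [hSmem]
      have h6 := congrArg (Subtype.val) h5
      push_cast at h6
      exact h6
  have main : ∀ m : ℕ, m + ψ ≤ n → ∃ V : Submodule K F,
      (∀ a ∈ V, a ≠ 0 → IntermediateField.adjoin K {a} = ⊤) ∧ Module.finrank K V = m := by
    intro m
    induction m with
    | zero =>
      intro _
      refine ⟨⊥, ?_, finrank_bot K F⟩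
      intro a ha ha0
      exact absurd ((Submodule.mem_bot K).mp ha) ha0
    | succ k ih =>
      intro hk'
      obtain ⟨V, hVprim, hVrank⟩ := ih (by omega)
      set T : ℕ → Submodule K F := fun d =>
        (Subalgebra.toSubmodule (Sf d).toSubalgebra) ⊔ V with hT
      have hTdef : ∀ d, T d = (Subalgebra.toSubmodule (Sf d).toSubalgebra) ⊔ V :=
        fun d => by rw [hT]
      have hTrank : ∀ d ∈ n.properDivisors, Module.finrank K (T d) ≤ n - 1 := by
        intro d hd'
        rw [hTdef d]
        have h1 : Module.finrank K (Subalgebra.toSubmodule (Sf d).toSubalgebra) ≤ ψ := by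
          rw [Subalgebra.finrank_toSubmodule]
          exact hψub (Sf d) (hSproper d hd')
        have h2 := Submodule.finrank_sup_add_finrank_inf_eq
          (Subalgebra.toSubmodule (Sf d).toSubalgebra) V
        omega
      have hA1 : 1 ≤ q ^ (n-1) := Nat.one_le_pow _ _ (by omega)
      have hcardT : ∀ d ∈ n.properDivisors,
          (Finset.univ.filter (fun x => x ∈ T d)).card ≤ q ^ (n-1) := by
        intro d hd'
        have h1 : (Finset.univ.filter (fun x => x ∈ T d)).card = Fintype.card (T d) :=
          (Fintype.card_subtype _).symm
        have h2 : Fintype.card (T d) = q ^ Module.finrank K (T d) :=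
          card_eq_pow_finrank (K := K)
        have h3 := hTrank d hd'
        have h4 := Nat.pow_le_pow_right (le_trans (by norm_num) hq2) h3
        omega
      have hone : 1 ∈ n.properDivisors := Nat.one_mem_properDivisors_iff_one_lt.mpr (by omega)
      have hpcq : n.properDivisors.card ≤ q := by
        have h1 : insert n n.properDivisors = n.divisors :=
          Nat.insert_self_properDivisors (by omega)
        have h2 : (insert n n.properDivisors).card = n.properDivisors.card + 1 :=
          Finset.card_insert_of_notMem Nat.self_notMem_properDivisors
        rw [h1] at h2
        omega
      set B : Finset F := n.properDivisors.biUnion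
        (fun d => (Finset.univ.filter (fun x => x ∈ T d)).erase 0) with hB
      have hcardB : B.card ≤ q * (q ^ (n-1) - 1) := by
        have h1 := Finset.card_biUnion_le (s := n.properDivisors)
          (t := fun d => (Finset.univ.filter (fun x => x ∈ T d)).erase 0)
        have h2 : ∀ d ∈ n.properDivisors,
            ((Finset.univ.filter (fun x => x ∈ T d)).erase 0).card ≤ q ^ (n-1) - 1 := by
          intro d hd'
          have h0 : (0:F) ∈ Finset.univ.filter (fun x => x ∈ T d) :=
            Finset.mem_filter.mpr ⟨Finset.mem_univ _, (T d).zero_mem⟩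
          rw [Finset.card_erase_of_mem h0]
          have := hcardT d hd'
          omega
        calc B.card ≤ _ := h1
          _ ≤ n.properDivisors.card * (q ^ (n-1) - 1) := by
              apply Finset.sum_le_card_nsmul
              exact h2
          _ ≤ q * (q ^ (n-1) - 1) := Nat.mul_le_mul_right _ hpcq
      have hqn : q * q ^ (n-1) = q ^ n := by
        rw [mul_comm, ← pow_succ]
        congr 1
        omega
      have hms : q * (q ^ (n-1) - 1) = q ^ n - q := by
        rw [Nat.mul_sub, mul_one, hqn]
      have h11 : q ≤ q ^ n := Nat.le_self_pow (by omega) q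
      have hex : ∃ x : F, x ∉ insert (0:F) B := by
        by_contra h
        push_neg at h
        have hsub : (Finset.univ : Finset F) ⊆ insert 0 B := fun x _ => h x
        have hcard := Finset.card_le_card hsub
        rw [Finset.card_univ] at hcard
        have hF : Fintype.card F = q ^ n := by
          rw [card_eq_pow_finrank (K := K) (V := F), hn]
        have hin : (insert (0:F) B).card ≤ B.card + 1 := Finset.card_insert_le _ _
        omega
      obtain ⟨x, hx⟩ := hex
      have hx0 : x ≠ 0 := fun h => hx (h ▸ Finset.mem_insert_self 0 B)
      have hxT : ∀ d ∈ n.properDivisors, x ∉ T d := by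
        intro d hd' hmem
        exact hx (Finset.mem_insert_of_mem (Finset.mem_biUnion.mpr
          ⟨d, hd', Finset.mem_erase.mpr ⟨hx0,
            Finset.mem_filter.mpr ⟨Finset.mem_univ x, hmem⟩⟩⟩))
      have hxV : x ∉ V := by
        intro hmem
        refine hxT 1 hone ?_
        rw [hTdef]
        exact Submodule.mem_sup_right hmem
      have hinf : V ⊓ (K ∙ x) = ⊥ := by
        rw [eq_bot_iff]
        rintro y hy
        rw [Submodule.mem_inf] at hy
        obtain ⟨hyV, hyx⟩ := hy
        obtain ⟨c, rfl⟩ := Submodule.mem_span_singleton.mp hyx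
        rcases eq_or_ne c 0 with rfl | hc
        · simp
        · exfalso
          apply hxV
          have h9 : (c⁻¹ * c) • x ∈ V := by
            rw [← smul_smul]
            exact V.smul_mem _ hyV
          rwa [inv_mul_cancel₀ hc, one_smul] at h9
      refine ⟨V ⊔ (K ∙ x), ?_, ?_⟩
      · intro a ha ha0
        rw [Submodule.mem_sup] at ha
        obtain ⟨v, hv, z, hz, rfl⟩ := ha
        obtain ⟨c, rfl⟩ := Submodule.mem_span_singleton.mp hz
        rcases eq_or_ne c 0 with rfl | hc
        · rw [zero_smul, add_zero] at ha0 ⊢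
          exact hVprim v hv ha0
        · by_contra hne
          obtain ⟨d, hd', hyd⟩ := hnonprim _ ha0 hne
          have haT : v + c • x ∈ T d := by
            rw [hTdef]
            exact Submodule.mem_sup_left
              (show v + c • x ∈ Subalgebra.toSubmodule (Sf d).toSubalgebra from hyd)
          have hvT : v ∈ T d := by
            rw [hTdef]
            exact Submodule.mem_sup_right hv
          have hcxT : c • x ∈ T d := by
            have h7 := (T d).sub_mem haT hvT
            simpa using h7
          have hxTd : x ∈ T d := by
            have h8 := (T d).smul_mem c⁻¹ hcxT
            simpa [smul_smul, inv_mul_cancel₀ hc] using h8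
          exact hxT d hd' hxTd
      · have h2 := Submodule.finrank_sup_add_finrank_inf_eq V (K ∙ x)
        rw [hinf, finrank_bot, finrank_span_singleton hx0] at h2
        omega
  exact main k hk

/-- Partitioning a finite field by primitive subspaces. Let `K` be a finite
field with `q` elements, `K ⊂ F` the extension of degree `n`, and suppose
`d(n) < q + 2`. Let `M₁` be a proper intermediate field with
`[M₁:K] = ψ(F,K)` and `W` a primitive `K`-subspace with `dim W = φ(F,K)`.
If `{W 1, …, W l}` is a subspace partition of `W` with `dim W i = t i ≤ ψ(F,K)`,
then for each nonzero `α ∈ M₁` and each `i` there is a `t i`-dimensional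
subspace `Wa i α` of `F` such that `W`, `M₁`, and the subspaces `Wa i α`
together form a subspace partition of `F`. -/
theorem stmt12 (K F : Type*) [Field K] [Fintype K] [Field F] [Algebra K F]
    [FiniteDimensional K F] (n : ℕ) (hn : Module.finrank K F = n)
    (hd : n.divisors.card < Fintype.card K + 2)
    (ψ φ : ℕ)
    (hψ : IsGreatest
      {d : ℕ | ∃ M : IntermediateField K F, M ≠ ⊤ ∧ Module.finrank K M = d} ψ)
    (hφ : IsGreatest
      {d : ℕ | ∃ V : Submodule K F,
        (∀ a ∈ V, a ≠ 0 → IntermediateField.adjoin K {a} = ⊤) ∧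
        Module.finrank K V = d} φ)
    (M₁ : IntermediateField K F) (hM₁ : M₁ ≠ ⊤)
    (hM₁ψ : Module.finrank K M₁ = ψ)
    (W : Submodule K F)
    (hWprim : ∀ a ∈ W, a ≠ 0 → IntermediateField.adjoin K {a} = ⊤)
    (hWφ : Module.finrank K W = φ)
    (l : ℕ) (Wp : Fin l → Submodule K F) (t : Fin l → ℕ)
    (hWple : ∀ i, Wp i ≤ W) (hWpne : ∀ i, Wp i ≠ ⊥)
    (hWpdim : ∀ i, Module.finrank K (Wp i) = t i) (ht : ∀ i, t i ≤ ψ)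
    (hWppart : ∀ x ∈ W, x ≠ 0 → ∃! i : Fin l, x ∈ Wp i) :
    ∃ Wa : Fin l → F → Submodule K F,
      (∀ i : Fin l, ∀ α ∈ M₁, α ≠ 0 → Module.finrank K (Wa i α) = t i) ∧
      (∀ U ∈ ({W, Subalgebra.toSubmodule M₁.toSubalgebra} ∪
          {U : Submodule K F | ∃ i : Fin l, ∃ α ∈ M₁, α ≠ 0 ∧ U = Wa i α} :
          Set (Submodule K F)), U ≠ ⊥) ∧
      (∀ x : F, x ≠ 0 →
        ∃! U : Submodule K F,
          U ∈ ({W, Subalgebra.toSubmodule M₁.toSubalgebra} ∪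
            {U : Submodule K F | ∃ i : Fin l, ∃ α ∈ M₁, α ≠ 0 ∧ U = Wa i α} :
            Set (Submodule K F)) ∧ x ∈ U) := by
  classical
  set Ms : Submodule K F := Subalgebra.toSubmodule M₁.toSubalgebra with hMs
  have hMmem : ∀ y : F, y ∈ Ms ↔ y ∈ M₁ := fun y => Iff.rfl
  have hMrank : Module.finrank K Ms = ψ := by
    rw [hMs, Subalgebra.finrank_toSubmodule, IntermediateField.finrank_eq_finrank_subalgebra]
    exact hM₁ψ
  have hMsne : Ms ≠ ⊤ := by
    intro htop
    apply hM₁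
    apply IntermediateField.toSubalgebra_injective
    rw [IntermediateField.top_toSubalgebra]
    exact Algebra.toSubmodule_eq_top.mp htop
  have hψpos : 0 < ψ := by
    rw [← hMrank]
    haveI : Nontrivial ↥Ms :=
      ⟨⟨0, ⟨(1:F), M₁.one_mem⟩, fun h =>
        one_ne_zero (show (1:F) = 0 from (congrArg Subtype.val h).symm)⟩⟩
    exact Module.finrank_pos
  have hψlt : ψ < n := by
    have h1 : Module.finrank K Ms < Module.finrank K F :=
      Submodule.finrank_lt hMsne
    rw [hMrank, hn] at h1
    exact h1
  have hn2 : 2 ≤ n := by omega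
  have hψub : ∀ M : IntermediateField K F, M ≠ ⊤ → Module.finrank K M ≤ ψ :=
    fun M hM => hψ.2 ⟨M, hM, rfl⟩
  obtain ⟨V0, hV0prim, hV0rank⟩ :=
    aux_exists_primitive K F n hn hn2 hd ψ hψub (n - ψ) (by omega)
  have hφlb : n - ψ ≤ φ := hφ.2 ⟨V0, hV0prim, hV0rank⟩
  have hWM : W ⊓ Ms = ⊥ := by
    rw [eq_bot_iff]
    intro x hx
    rw [Submodule.mem_inf] at hx
    rcases eq_or_ne x 0 with rfl | hx0
    · exact Submodule.zero_mem ⊥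
    · exfalso
      apply hM₁
      rw [eq_top_iff, ← hWprim x hx.1 hx0]
      exact IntermediateField.adjoin_le_iff.mpr (Set.singleton_subset_iff.mpr hx.2)
  have hsum : Module.finrank K ↥(W ⊔ Ms) = φ + ψ := by
    have h2 := Submodule.finrank_sup_add_finrank_inf_eq W Ms
    rw [hWM, finrank_bot, hWφ, hMrank] at h2
    omega
  have hsuple : φ + ψ ≤ n := by
    have := Submodule.finrank_le (W ⊔ Ms)
    rw [hsum, hn] at this
    exact this
  have hφeq : φ + ψ = n := by omega
  have hsup_top : W ⊔ Ms = ⊤ :=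
    Submodule.eq_top_of_finrank_eq (by rw [hsum, hn]; omega)
  have hdec : ∀ w m w' m' : F, w ∈ W → m ∈ Ms → w' ∈ W → m' ∈ Ms →
      w + m = w' + m' → w = w' ∧ m = m' := by
    intro w m w' m' hw hm hw' hm' heq
    have h1 : w - w' = m' - m := by
      rw [sub_eq_sub_iff_add_eq_add]
      rw [heq]
      ring
    have h2 : w - w' ∈ W := W.sub_mem hw hw'
    have h3 : w - w' ∈ Ms := h1 ▸ Ms.sub_mem hm' hm
    have h4 : w - w' ∈ (⊥ : Submodule K F) := hWM ▸ Submodule.mem_inf.mpr ⟨h2, h3⟩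
    have h5 : w = w' := by
      have := (Submodule.mem_bot K).mp h4
      linear_combination this
    refine ⟨h5, ?_⟩
    rw [h5] at heq
    exact add_left_cancel heq
  have hti : ∀ i, 0 < t i := by
    intro i
    rcases Nat.eq_zero_or_pos (t i) with h | h
    · exfalso
      apply hWpne i
      have := hWpdim i
      rw [h] at this
      exact (Submodule.finrank_eq_zero (R := K)).mp this
    · exact h
  -- injective linear maps into Ms
  have hlamex : ∀ i : Fin l, ∃ g : ↥(Wp i) →ₗ[K] F,
      Function.Injective g ∧ ∀ w, g w ∈ Ms := by
    intro i
    let bW := Module.finBasisOfFinrankEq K ↥(Wp i) (hWpdim i)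
    let bM := Module.finBasisOfFinrankEq K ↥Ms hMrank
    let surj : Fin ψ → Fin (t i) := fun j =>
      if h : (j : ℕ) < t i then ⟨j, h⟩ else ⟨0, hti i⟩
    have hsurj : Function.Surjective surj := by
      intro a
      refine ⟨⟨(a : ℕ), lt_of_lt_of_le a.2 (ht i)⟩, ?_⟩
      simp [surj, a.isLt]
    let g : ↥(Wp i) →ₗ[K] ↥Ms :=
      bM.equivFun.symm.toLinearMap ∘ₗ (LinearMap.funLeft K K surj) ∘ₗ
        bW.equivFun.toLinearMap
    have hginj : Function.Injective g := by
      simp only [g, LinearMap.coe_comp, LinearEquiv.coe_coe]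
      exact bM.equivFun.symm.injective.comp
        ((LinearMap.funLeft_injective_of_surjective K K surj hsurj).comp
          bW.equivFun.injective)
    refine ⟨Ms.subtype ∘ₗ g, ?_, fun w => (g w).2⟩
    simp only [LinearMap.coe_comp, Submodule.coe_subtype]
    exact Subtype.val_injective.comp hginj
  choose lam hlaminj hlammem using hlamex
  -- the maps f i α
  set f : (i : Fin l) → F → (↥(Wp i) →ₗ[K] F) :=
    fun i α => (Wp i).subtype + (LinearMap.mulLeft K α) ∘ₗ (lam i) with hfdef
  have happ : ∀ (i : Fin l) (α : F) (w : ↥(Wp i)), f i α w = (w : F) + α * lam i w := by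
    intro i α w
    rw [hfdef]
    simp [LinearMap.mulLeft_apply]
  refine ⟨fun i α => LinearMap.range (f i α), ?_, ?_, ?_⟩
  · -- dimensions
    intro i α hα hα0
    have hfinj : Function.Injective (f i α) := by
      intro w w' heq
      have h1 : (w : F) + α * lam i w = (w' : F) + α * lam i w' := by
        rw [← happ, ← happ, heq]
      have h2 := hdec _ _ _ _ (hWple i w.2) (M₁.mul_mem hα (hlammem i w))
        (hWple i w'.2) (M₁.mul_mem hα (hlammem i w')) h1
      exact Subtype.ext h2.1
    rw [LinearMap.finrank_range_of_inj hfinj, hWpdim i]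
  · -- nonbot
    intro U hU
    simp only [Set.mem_union, Set.mem_insert_iff, Set.mem_singleton_iff,
      Set.mem_setOf_eq] at hU
    rcases hU with (rfl | rfl) | ⟨i, α, hα, hα0, rfl⟩
    · intro hbot
      rw [hbot, finrank_bot] at hWφ
      omega
    · intro hbot
      have h1 : (1:F) ∈ Ms := M₁.one_mem
      rw [hbot] at h1
      exact one_ne_zero ((Submodule.mem_bot K).mp h1)
    · intro hbot
      have hfinj : Function.Injective (f i α) := by
        intro w w' heq
        have h1 : (w : F) + α * lam i w = (w' : F) + α * lam i w' := by
          rw [← happ, ← happ, heq]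
        have h2 := hdec _ _ _ _ (hWple i w.2) (M₁.mul_mem hα (hlammem i w))
          (hWple i w'.2) (M₁.mul_mem hα (hlammem i w')) h1
        exact Subtype.ext h2.1
      have h3 := LinearMap.finrank_range_of_inj hfinj
      rw [hbot, finrank_bot, hWpdim i] at h3
      have := hti i
      omega
  · -- partition
    intro x hx0
    have hxtop : x ∈ W ⊔ Ms := hsup_top ▸ Submodule.mem_top
    obtain ⟨w, hw, m, hm, hwm⟩ := Submodule.mem_sup.mp hxtop
    have hWmem : W ∈ ({W, Ms} ∪
        {U : Submodule K F | ∃ i : Fin l, ∃ α ∈ M₁, α ≠ 0 ∧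
          U = LinearMap.range (f i α)} : Set (Submodule K F)) :=
      Set.mem_union_left _ (Set.mem_insert _ _)
    have hMsmem : Ms ∈ ({W, Ms} ∪
        {U : Submodule K F | ∃ i : Fin l, ∃ α ∈ M₁, α ≠ 0 ∧
          U = LinearMap.range (f i α)} : Set (Submodule K F)) :=
      Set.mem_union_left _ (Set.mem_insert_of_mem _ rfl)
    rcases eq_or_ne m 0 with rfl | hm0
    · -- x ∈ W
      rw [add_zero] at hwm
      subst hwm
      refine ⟨W, ⟨hWmem, hw⟩, ?_⟩
      rintro U' ⟨hU', hxU'⟩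
      simp only [Set.mem_union, Set.mem_insert_iff, Set.mem_singleton_iff,
        Set.mem_setOf_eq] at hU'
      rcases hU' with (rfl | rfl) | ⟨j, β, hβ, hβ0, rfl⟩
      · rfl
      · exfalso
        have h1 : w ∈ (⊥ : Submodule K F) := hWM ▸ Submodule.mem_inf.mpr ⟨hw, hxU'⟩
        exact hx0 ((Submodule.mem_bot K).mp h1)
      · exfalso
        obtain ⟨w', hw'⟩ := LinearMap.mem_range.mp hxU'
        rw [happ] at hw'
        have h1 : (w' : F) + β * lam j w' = w + 0 := by rw [hw', add_zero]
        have h2 := hdec _ _ _ _ (hWple j w'.2) (M₁.mul_mem hβ (hlammem j w'))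
          hw (Submodule.zero_mem Ms) h1
        have h3 : lam j w' = 0 := by
          rcases mul_eq_zero.mp h2.2 with h | h
          · exact absurd h hβ0
          · exact h
        have h4 : w' = 0 := hlaminj j (h3.trans (map_zero (lam j)).symm)
        apply hx0
        rw [← h2.1, h4]
        simp
    · rcases eq_or_ne w 0 with rfl | hw0
      · -- x ∈ Ms
        rw [zero_add] at hwm
        subst hwm
        refine ⟨Ms, ⟨hMsmem, hm⟩, ?_⟩
        rintro U' ⟨hU', hxU'⟩
        simp only [Set.mem_union, Set.mem_insert_iff, Set.mem_singleton_iff,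
          Set.mem_setOf_eq] at hU'
        rcases hU' with (rfl | rfl) | ⟨j, β, hβ, hβ0, rfl⟩
        · exfalso
          have h1 : m ∈ (⊥ : Submodule K F) := hWM ▸ Submodule.mem_inf.mpr ⟨hxU', hm⟩
          exact hx0 ((Submodule.mem_bot K).mp h1)
        · rfl
        · exfalso
          obtain ⟨w', hw'⟩ := LinearMap.mem_range.mp hxU'
          rw [happ] at hw'
          have h1 : (w' : F) + β * lam j w' = 0 + m := by rw [hw', zero_add]
          have h2 := hdec _ _ _ _ (hWple j w'.2) (M₁.mul_mem hβ (hlammem j w'))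
            (Submodule.zero_mem W) hm h1
          have h4 : w' = 0 := Subtype.ext h2.1
          apply hx0
          rw [← hw', h4]
          simp
      · -- generic case
        obtain ⟨i, hwi, huniq⟩ := hWppart w hw hw0
        set ws : ↥(Wp i) := ⟨w, hwi⟩ with hws
        have hlw : lam i ws ≠ 0 := by
          intro h
          have h4 : ws = 0 := hlaminj i (h.trans (map_zero (lam i)).symm)
          apply hw0
          have := congrArg (Subtype.val) h4
          exact this
        have hlwM : lam i ws ∈ M₁ := hlammem i ws
        have hmM : m ∈ M₁ := hm
        have hαM : m * (lam i ws)⁻¹ ∈ M₁ := M₁.mul_mem hmM (M₁.inv_mem hlwM)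
        have hα0 : m * (lam i ws)⁻¹ ≠ 0 := mul_ne_zero hm0 (inv_ne_zero hlw)
        have hxin : x ∈ LinearMap.range (f i (m * (lam i ws)⁻¹)) := by
          rw [LinearMap.mem_range]
          refine ⟨ws, ?_⟩
          rw [happ]
          show w + m * (lam i ws)⁻¹ * lam i ws = x
          rw [mul_assoc, inv_mul_cancel₀ hlw, mul_one]
          exact hwm
        refine ⟨LinearMap.range (f i (m * (lam i ws)⁻¹)),
          ⟨Set.mem_union_right _ ⟨i, m * (lam i ws)⁻¹, hαM, hα0, rfl⟩, hxin⟩, ?_⟩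
        rintro U' ⟨hU', hxU'⟩
        simp only [Set.mem_union, Set.mem_insert_iff, Set.mem_singleton_iff,
          Set.mem_setOf_eq] at hU'
        rcases hU' with (rfl | rfl) | ⟨j, β, hβ, hβ0, rfl⟩
        · exfalso
          have h1 : x + 0 = w + m := by rw [add_zero, hwm]
          have h2 := hdec _ _ _ _ hxU' (Submodule.zero_mem Ms) hw hm h1
          exact hm0 h2.2.symm
        · exfalso
          have h1 : (0:F) + x = w + m := by rw [zero_add, hwm]
          have h2 := hdec _ _ _ _ (Submodule.zero_mem W) hxU' hw hm h1
          exact hw0 h2.1.symm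
        · obtain ⟨w', hw'⟩ := LinearMap.mem_range.mp hxU'
          rw [happ] at hw'
          have h1 : (w' : F) + β * lam j w' = w + m := by rw [hw', hwm]
          have h2 := hdec _ _ _ _ (hWple j w'.2) (M₁.mul_mem hβ (hlammem j w'))
            hw hm h1
          have hwj : w ∈ Wp j := h2.1 ▸ w'.2
          have hji : j = i := huniq j hwj
          subst hji
          have hww : w' = ws := Subtype.ext h2.1
          rw [hww] at h2
          have hβα : β = m * (lam j ws)⁻¹ := by
            rw [← h2.2, mul_assoc, mul_inv_cancel₀ hlw, mul_one]
          rw [hβα]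
end
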